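/- For every real r > 0 there exists a constant c_r > 0, depending on r but not on n, such that for all integers n ≥ 2 one has c_r ≤ E(n,r) ≤ 3/2; one may take c_r = M(π/4, r)/(2(1+r)), where M(v,r) := (1/c(2,r)) ∫_v^{π/2} (cos θ)^r dθ. -/

import Mathlib

/-!
Splitting the integrals of `cos^r` at `α = α(t,φ)` and `α - φ ≥ -π/2` gives
`1 + t^r - F_r(t,φ) = t^r M(α,r) + (1/c(2,r)) ∫_{-π/2}^{α-φ} cos^r`,
which lies in `[0,1]` for `t ∈ [0,1]`, `φ ∈ (0,π)`, and is at least `t^r M(π/4,r)` when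
`φ ≤ π/2`, because then `α ≤ π/4`. Hence the inner integral lies in `[0, 1/n]`, and is at
least `M(π/4,r)/(n+r)` for `φ ≤ π/2`. Since `∫_0^π sin^{n-2} = c(2,n-2)` with half of it over
`(0,π/2)`, this gives `E(n,r) ≤ 1` and `E(n,r) ≥ n M(π/4,r)/(2(n+r)) ≥ M(π/4,r)/(2(1+r))`.
-/

open MeasureTheory Real Set Filter

noncomputable section

/-- `kappa m` is the volume `κ_m = π^{m/2}/Γ(m/2+1)` of the `m`-dimensional unit ball. -/
def kappa (m : ℕ) : ℝ := Real.pi ^ ((m : ℝ) / 2) / Real.Gamma ((m : ℝ) / 2 + 1)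

/-- `omegaC m` is the surface area `ω_m = 2π^{m/2}/Γ(m/2)` of the unit sphere `S^{m-1}`. -/
def omegaC (m : ℕ) : ℝ := 2 * Real.pi ^ ((m : ℝ) / 2) / Real.Gamma ((m : ℝ) / 2)

/-- `bn2 n = ω_{n-1} ω_n / (4π)`. -/
def bn2 (n : ℕ) : ℝ := omegaC (n - 1) * omegaC n / (4 * Real.pi)

/-- The `j`-th standard basis vector of `ℝ^m` (or `0` if `j ≥ m`). -/
def eVec (m j : ℕ) : EuclideanSpace ℝ (Fin m) :=
  if h : j < m then EuclideanSpace.single ⟨j, h⟩ (1 : ℝ) else 0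

/-- `cC m s = c(m,s) = ∫_{S^{m-1}} ⟨e,u⟩₊^s dH^{m-1}(u)` for the fixed unit vector `e = e₁`. -/
def cC (m : ℕ) (s : ℝ) : ℝ :=
  ∫ u in Metric.sphere (0 : EuclideanSpace ℝ (Fin m)) 1,
    max ((inner ℝ (eVec m 0) u : ℝ)) 0 ^ s ∂(μH[(m : ℝ) - 1])

/-- `c2 s = c(2,s) = ∫_{-π/2}^{π/2} (cos θ)^s dθ`. -/
def c2 (s : ℝ) : ℝ := ∫ θ in (-(Real.pi / 2))..(Real.pi / 2), Real.cos θ ^ s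

/-- The hyperplane `H(u,t) = {x ∈ ℝⁿ : ⟨x,u⟩ = t}`. -/
def hyp (n : ℕ) (u : EuclideanSpace ℝ (Fin n)) (t : ℝ) : Set (EuclideanSpace ℝ (Fin n)) :=
  {x | (inner ℝ x u : ℝ) = t}

/-- `innerInt n r K = ∫_{S^{n-1}} ∫_0^∞ 1{H(u,t) ∩ K ≠ ∅} t^{r-1} dt dH^{n-1}(u)`. -/
def innerInt (n : ℕ) (r : ℝ) (K : Set (EuclideanSpace ℝ (Fin n))) : ℝ :=
  ∫ u in Metric.sphere (0 : EuclideanSpace ℝ (Fin n)) 1,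
    (∫ t in Set.Ioi (0 : ℝ),
      Set.indicator {t : ℝ | (hyp n u t ∩ K).Nonempty} (fun t => t ^ (r - 1)) t)
    ∂(μH[(n : ℝ) - 1])

/-- `momentI n k r γ = I_k(n,r,γ)`, the `k`-th moment of the volume of the zero cell. -/
def momentI (n k : ℕ) (r γ : ℝ) : ℝ :=
  ∫ x : Fin k → EuclideanSpace ℝ (Fin n),
    Real.exp (-(2 * γ / ((n : ℝ) * kappa n)) *
      innerInt n r (convexHull ℝ (insert 0 (Set.range x))))

/-- `VarF n r γ = Var(n,r,γ) = I_2 - I_1²`, the variance of the volume of the zero cell. -/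
def VarF (n : ℕ) (r γ : ℝ) : ℝ := momentI n 2 r γ - (momentI n 1 r γ) ^ 2

/-- `alphaF t φ = α(t,φ) = arctan((t - cos φ)/ sin φ)`. -/
def alphaF (t φ : ℝ) : ℝ := Real.arctan ((t - Real.cos φ) / Real.sin φ)

/-- The auxiliary function `F_r(t,φ)`. -/
def Fr (r t φ : ℝ) : ℝ :=
  (1 / c2 r) * (t ^ r * (∫ θ in (-(Real.pi / 2))..(alphaF t φ), Real.cos θ ^ r)
    + ∫ θ in (alphaF t φ - φ)..(Real.pi / 2), Real.cos θ ^ r)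

/-- The planar line `L(θ,t) = {x ∈ ℝ² : x₁ cos θ + x₂ sin θ = t}`. -/
def lineL (θ t : ℝ) : Set (ℝ × ℝ) := {x | x.1 * Real.cos θ + x.2 * Real.sin θ = t}

/-- `planarInt r K = ∫_0^{2π} ∫_0^∞ 1{L(θ,t) ∩ K ≠ ∅} t^{r-1} dt dθ`. -/
def planarInt (r : ℝ) (K : Set (ℝ × ℝ)) : ℝ :=
  ∫ θ in (0 : ℝ)..(2 * Real.pi),
    ∫ t in Set.Ioi (0 : ℝ),
      Set.indicator {t : ℝ | (lineL θ t ∩ K).Nonempty} (fun t => t ^ (r - 1)) t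

/-- The auxiliary quantity `D(n,r,γ)`. -/
def Dconst (n : ℕ) (r γ : ℝ) : ℝ :=
  (n : ℝ) * kappa n ^ 2 / r * Real.Gamma (2 * (n : ℝ) / r + 1) *
    ((n : ℝ) * kappa n * r / (4 * γ * cC n r)) ^ (2 * (n : ℝ) / r)

/-- The auxiliary quantity `E(n,r)`. -/
def Econst (n : ℕ) (r : ℝ) : ℝ :=
  ((n : ℝ) / c2 ((n : ℝ) - 2)) *
    ∫ φ in (0 : ℝ)..Real.pi, (Real.sin φ) ^ (n - 2) *
      ∫ t in (0 : ℝ)..1, t ^ (n - 1) * (1 + t ^ r - Fr r t φ)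

/-- `Mfun v r = M(v,r) = (1/c(2,r)) ∫_v^{π/2} (cos θ)^r dθ`. -/
def Mfun (v r : ℝ) : ℝ := (1 / c2 r) * ∫ θ in v..(Real.pi / 2), Real.cos θ ^ r

/-- `Aconst r = A(r) = π^{(r+1)/2}/(e Γ((r+1)/2))`. -/
def Aconst (r : ℝ) : ℝ := Real.pi ^ ((r + 1) / 2) / (Real.exp 1 * Real.Gamma ((r + 1) / 2))

/-- `Bconst a = B(a) = 2πe(a+1)^{(a+1)/a}/a`. -/
def Bconst (a : ℝ) : ℝ := 2 * Real.pi * Real.exp 1 * (a + 1) ^ ((a + 1) / a) / a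

/-- The intensity `γ̂(a,n)` normalizing the expected volume of the zero cell to `1/λ`. -/
def gammaHat (a lam : ℝ) (n : ℕ) : ℝ :=
  a * (n : ℝ) ^ 2 * kappa n / (2 * cC n (a * n)) *
    (lam * Real.Gamma (1 / a + 1) * kappa n) ^ a

/-- The embedding of `ℝ²` onto `span{e₁,e₂} ⊆ ℝⁿ`. -/
def emb (n : ℕ) (q : ℝ × ℝ) : EuclideanSpace ℝ (Fin n) :=
  q.1 • eVec n 0 + q.2 • eVec n 1

/-- `para2 n x y = ∇₂(x,y)`, the area of the parallelogram spanned by `x` and `y`. -/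
def para2 (n : ℕ) (x y : EuclideanSpace ℝ (Fin n)) : ℝ :=
  Real.sqrt (‖x‖ ^ 2 * ‖y‖ ^ 2 - (inner ℝ x y : ℝ) ^ 2)

end

open intervalIntegral

section CosRpow

variable {r : ℝ}

lemma intervalIntegrable_cos_rpow (hr : 0 ≤ r) (a b : ℝ) :
    IntervalIntegrable (fun θ => cos θ ^ r) volume a b :=
  ((continuous_rpow_const hr).comp continuous_cos).intervalIntegrable a b

lemma integral_cos_rpow_add_adjacent (hr : 0 ≤ r) (a b c : ℝ) :
    (∫ θ in a..b, cos θ ^ r) + ∫ θ in b..c, cos θ ^ r = ∫ θ in a..c, cos θ ^ r :=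
  integral_add_adjacent_intervals (intervalIntegrable_cos_rpow hr a b)
    (intervalIntegrable_cos_rpow hr b c)

lemma integral_cos_rpow_nonneg {a b : ℝ} (ha : -(π / 2) ≤ a) (hab : a ≤ b)
    (hb : b ≤ π / 2) : 0 ≤ ∫ θ in a..b, cos θ ^ r :=
  integral_nonneg hab fun _ hθ =>
    rpow_nonneg (cos_nonneg_of_mem_Icc ⟨ha.trans hθ.1, hθ.2.trans hb⟩) r

lemma integral_cos_rpow_pos (hr : 0 ≤ r) {a b : ℝ} (ha : -(π / 2) ≤ a) (hab : a < b)
    (hb : b ≤ π / 2) : 0 < ∫ θ in a..b, cos θ ^ r :=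
  intervalIntegral_pos_of_pos_on (intervalIntegrable_cos_rpow hr a b)
    (fun _ hθ =>
      rpow_pos_of_pos (cos_pos_of_mem_Ioo ⟨ha.trans_lt hθ.1, hθ.2.trans_le hb⟩) r) hab

lemma c2_pos (hr : 0 ≤ r) : 0 < c2 r :=
  integral_cos_rpow_pos hr le_rfl (by linarith [pi_pos]) le_rfl

lemma Mfun_nonneg {v : ℝ} (hv : -(π / 2) ≤ v) (hv' : v ≤ π / 2) : 0 ≤ Mfun v r :=
  mul_nonneg (one_div_nonneg.mpr (integral_cos_rpow_nonneg le_rfl (by linarith) le_rfl))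
    (integral_cos_rpow_nonneg hv hv' le_rfl)

lemma Mfun_pos (hr : 0 ≤ r) {v : ℝ} (hv : -(π / 2) ≤ v) (hv' : v < π / 2) : 0 < Mfun v r :=
  mul_pos (one_div_pos.mpr (c2_pos hr)) (integral_cos_rpow_pos hr hv hv' le_rfl)

lemma Mfun_antitoneOn (hr : 0 ≤ r) :
    AntitoneOn (fun v => Mfun v r) (Icc (-(π / 2)) (π / 2)) := by
  intro a ha b hb hab
  have hsplit := integral_cos_rpow_add_adjacent hr a b (π / 2)
  have hab' := integral_cos_rpow_nonneg (r := r) ha.1 hab hb.2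
  exact mul_le_mul_of_nonneg_left (by linarith) (one_div_pos.mpr (c2_pos hr)).le

end CosRpow

section AlphaF

variable {t φ : ℝ}

lemma alphaF_mem_Ioo (t φ : ℝ) : alphaF t φ ∈ Ioo (-(π / 2)) (π / 2) :=
  ⟨neg_pi_div_two_lt_arctan _, arctan_lt_pi_div_two _⟩

lemma sub_pi_div_two_le_alphaF (ht : 0 ≤ t) (hφ : 0 < φ) (hφ' : φ < π) :
    φ - π / 2 ≤ alphaF t φ := by
  have hsin : 0 < sin φ := sin_pos_of_pos_of_lt_pi hφ hφ'
  have htan : tan (φ - π / 2) = (0 - cos φ) / sin φ := by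
    rw [tan_eq_sin_div_cos, sin_sub_pi_div_two, cos_sub_pi_div_two]
    ring
  calc φ - π / 2 = arctan (tan (φ - π / 2)) :=
        (arctan_tan (by linarith) (by linarith)).symm
    _ ≤ alphaF t φ := by
        rw [htan]
        exact arctan_strictMono.monotone (div_le_div_of_nonneg_right (by linarith) hsin.le)

lemma alphaF_le_pi_div_four (ht : t ≤ 1) (hφ : 0 < φ) (hφ' : φ ≤ π / 2) :
    alphaF t φ ≤ π / 4 := by
  have hsin : 0 < sin φ := sin_pos_of_pos_of_lt_pi hφ (by linarith [pi_pos])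
  have hcos : 0 ≤ cos φ := cos_nonneg_of_mem_Icc ⟨by linarith, hφ'⟩
  have hsum : 1 ≤ cos φ + sin φ := by
    nlinarith [sin_sq_add_cos_sq φ, sin_le_one φ, cos_le_one φ]
  calc alphaF t φ ≤ arctan 1 :=
        arctan_strictMono.monotone ((div_le_one hsin).mpr (by linarith))
    _ = π / 4 := arctan_one

lemma continuousOn_alphaF :
    ContinuousOn (fun p : ℝ × ℝ => alphaF p.1 p.2) {p | sin p.2 ≠ 0} := by
  unfold alphaF
  exact continuous_arctan.comp_continuousOn
    ((continuous_fst.sub (continuous_cos.comp continuous_snd)).continuousOn.div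
      (continuous_sin.comp continuous_snd).continuousOn fun _ hp => hp)

end AlphaF

section Integrand

variable {r t φ : ℝ}

lemma one_add_rpow_sub_Fr (hr : 0 ≤ r) (t φ : ℝ) :
    1 + t ^ r - Fr r t φ =
      t ^ r * Mfun (alphaF t φ) r +
        (∫ θ in -(π / 2)..(alphaF t φ - φ), cos θ ^ r) / c2 r := by
  have hc := (c2_pos hr).ne'
  have h₁ := integral_cos_rpow_add_adjacent hr (-(π / 2)) (alphaF t φ) (π / 2)
  have h₂ := integral_cos_rpow_add_adjacent hr (-(π / 2)) (alphaF t φ - φ) (π / 2)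
  rw [← c2] at h₁ h₂
  unfold Fr Mfun
  field_simp
  linear_combination (-t ^ r) * h₁ - h₂

lemma rpow_mul_Mfun_alphaF_le (hr : 0 ≤ r) (ht : 0 ≤ t) (hφ : 0 < φ) (hφ' : φ < π) :
    t ^ r * Mfun (alphaF t φ) r ≤ 1 + t ^ r - Fr r t φ := by
  have hα := sub_pi_div_two_le_alphaF ht hφ hφ'
  have hα' := (alphaF_mem_Ioo t φ).2
  have hrest : 0 ≤ (∫ θ in -(π / 2)..(alphaF t φ - φ), cos θ ^ r) / c2 r :=
    div_nonneg (integral_cos_rpow_nonneg le_rfl (by linarith) (by linarith)) (c2_pos hr).le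
  rw [one_add_rpow_sub_Fr hr]
  linarith

lemma one_add_rpow_sub_Fr_le_one (hr : 0 ≤ r) (ht : 0 ≤ t) (ht' : t ≤ 1) (hφ : 0 < φ)
    (hφ' : φ < π) : 1 + t ^ r - Fr r t φ ≤ 1 := by
  set α := alphaF t φ
  obtain ⟨hα₁, hα₂⟩ := alphaF_mem_Ioo t φ
  have hαφ := sub_pi_div_two_le_alphaF ht hφ hφ'
  have hc := c2_pos hr
  have hsplit := integral_cos_rpow_add_adjacent hr (-(π / 2)) α (π / 2)
  rw [← c2] at hsplit
  have hmono : (∫ θ in -(π / 2)..(α - φ), cos θ ^ r) ≤ ∫ θ in -(π / 2)..α, cos θ ^ r := by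
    have hadd := integral_cos_rpow_add_adjacent hr (-(π / 2)) (α - φ) α
    have hmid := integral_cos_rpow_nonneg (r := r) (by linarith) (by linarith : α - φ ≤ α) hα₂.le
    linarith
  have hM : t ^ r * Mfun α r ≤ Mfun α r :=
    mul_le_of_le_one_left (Mfun_nonneg hα₁.le hα₂.le) (rpow_le_one ht ht' hr)
  rw [one_add_rpow_sub_Fr hr]
  calc t ^ r * Mfun α r + (∫ θ in -(π / 2)..(α - φ), cos θ ^ r) / c2 r
      ≤ Mfun α r + (∫ θ in -(π / 2)..α, cos θ ^ r) / c2 r := by gcongr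
    _ = 1 := by unfold Mfun; field_simp; linarith

lemma continuousOn_Fr (hr : 0 ≤ r) :
    ContinuousOn (fun p : ℝ × ℝ => Fr r p.1 p.2) {p | sin p.2 ≠ 0} := by
  have hprim : ∀ a, Continuous fun x => ∫ θ in a..x, cos θ ^ r :=
    continuous_primitive (intervalIntegrable_cos_rpow hr)
  have hprim' : Continuous fun x => ∫ θ in x..(π / 2), cos θ ^ r :=
    (hprim _).neg.congr fun x => (integral_symm _ _).symm
  unfold Fr
  exact continuousOn_const.mul
    ((((continuous_rpow_const hr).comp continuous_fst).continuousOn.mul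
      ((hprim _).comp_continuousOn continuousOn_alphaF)).add
      (hprim'.comp_continuousOn (continuousOn_alphaF.sub continuous_snd.continuousOn)))

end Integrand

section InnerIntegral

/-- `innerIntegralE r (n - 1) φ` is the inner `t`-integral in `E(n,r)`. -/
noncomputable def innerIntegralE (r : ℝ) (k : ℕ) (φ : ℝ) : ℝ :=
  ∫ t in (0 : ℝ)..1, t ^ k * (1 + t ^ r - Fr r t φ)

variable {r φ : ℝ}

lemma continuousOn_innerIntegrand (hr : 0 ≤ r) (k : ℕ) :
    ContinuousOn (fun p : ℝ × ℝ => p.1 ^ k * (1 + p.1 ^ r - Fr r p.1 p.2))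
      {p | sin p.2 ≠ 0} :=
  (continuous_fst.pow k).continuousOn.mul <|
    (continuousOn_const.add ((continuous_rpow_const hr).comp continuous_fst).continuousOn).sub
      (continuousOn_Fr hr)

lemma intervalIntegrable_innerIntegrand (hr : 0 ≤ r) (k : ℕ) (hφ : sin φ ≠ 0) (a b : ℝ) :
    IntervalIntegrable (fun t => t ^ k * (1 + t ^ r - Fr r t φ)) volume a b :=
  ((continuousOn_innerIntegrand hr k).comp_continuous
    (continuous_id.prodMk continuous_const) fun _ => hφ).intervalIntegrable a b

lemma continuousOn_innerIntegralE (hr : 0 ≤ r) (k : ℕ) :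
    ContinuousOn (innerIntegralE r k) {φ | sin φ ≠ 0} := by
  rw [continuousOn_iff_continuous_domRestrict]
  exact continuous_parametric_intervalIntegral_of_continuous'
    (f := fun (φ : {φ : ℝ | sin φ ≠ 0}) t => t ^ k * (1 + t ^ r - Fr r t φ)) (μ := volume)
    ((continuousOn_innerIntegrand hr k).comp_continuous
      (continuous_snd.prodMk (continuous_subtype_val.comp continuous_fst)) fun p => p.1.2) 0 1

lemma innerIntegralE_nonneg (hr : 0 ≤ r) (k : ℕ) (hφ : 0 < φ) (hφ' : φ < π) :
    0 ≤ innerIntegralE r k φ :=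
  integral_nonneg zero_le_one fun t ht =>
    mul_nonneg (pow_nonneg ht.1 k) <|
      (mul_nonneg (rpow_nonneg ht.1 r)
        (Mfun_nonneg (alphaF_mem_Ioo t φ).1.le (alphaF_mem_Ioo t φ).2.le)).trans
      (rpow_mul_Mfun_alphaF_le hr ht.1 hφ hφ')

lemma innerIntegralE_le (hr : 0 ≤ r) (k : ℕ) (hφ : 0 < φ) (hφ' : φ < π) :
    innerIntegralE r k φ ≤ 1 / (k + 1) :=
  calc innerIntegralE r k φ ≤ ∫ t in (0 : ℝ)..1, t ^ k :=
        integral_mono_on zero_le_one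
          (intervalIntegrable_innerIntegrand hr k (sin_pos_of_pos_of_lt_pi hφ hφ').ne' 0 1)
          ((continuous_pow k).intervalIntegrable 0 1) fun t ht =>
          mul_le_of_le_one_right (pow_nonneg ht.1 k)
            (one_add_rpow_sub_Fr_le_one hr ht.1 ht.2 hφ hφ')
    _ = 1 / (k + 1) := by simp [integral_pow]

lemma Mfun_div_le_innerIntegralE (hr : 0 ≤ r) (k : ℕ) (hφ : 0 < φ) (hφ' : φ ≤ π / 2) :
    Mfun (π / 4) r / (k + 1 + r) ≤ innerIntegralE r k φ := by
  have hφπ : φ < π := by linarith [pi_pos]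
  calc Mfun (π / 4) r / (k + 1 + r)
        = ∫ t in (0 : ℝ)..1, Mfun (π / 4) r * t ^ ((k : ℝ) + r) := by
        have hk : (0 : ℝ) < k + r + 1 := by positivity
        rw [intervalIntegral.integral_const_mul, integral_rpow (Or.inl (by linarith)),
          one_rpow, zero_rpow hk.ne', add_right_comm]
        ring
    _ ≤ innerIntegralE r k φ := by
        refine integral_mono_on_of_le_Ioo zero_le_one
          ((continuous_const.mul (continuous_rpow_const (by positivity))).intervalIntegrable 0 1)
          (intervalIntegrable_innerIntegrand hr k (sin_pos_of_pos_of_lt_pi hφ hφπ).ne' 0 1)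
          fun t ht => ?_
        obtain ⟨hα₁, hα₂⟩ := alphaF_mem_Ioo t φ
        have hM : Mfun (π / 4) r ≤ Mfun (alphaF t φ) r :=
          Mfun_antitoneOn hr ⟨hα₁.le, hα₂.le⟩ ⟨by linarith, by linarith⟩
            (alphaF_le_pi_div_four ht.2.le hφ hφ')
        rw [rpow_add ht.1, rpow_natCast]
        calc Mfun (π / 4) r * (t ^ k * t ^ r) = t ^ k * (t ^ r * Mfun (π / 4) r) := by ring
          _ ≤ t ^ k * (t ^ r * Mfun (alphaF t φ) r) :=
            mul_le_mul_of_nonneg_left (mul_le_mul_of_nonneg_left hM (rpow_nonneg ht.1.le r))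
              (pow_nonneg ht.1.le k)
          _ ≤ t ^ k * (1 + t ^ r - Fr r t φ) :=
            mul_le_mul_of_nonneg_left (rpow_mul_Mfun_alphaF_le hr ht.1.le hφ hφπ)
              (pow_nonneg ht.1.le k)

end InnerIntegral

section OuterIntegral

variable {m : ℕ}

lemma integral_sin_pow_eq_c2 (m : ℕ) : ∫ φ in (0 : ℝ)..π, sin φ ^ m = c2 m := by
  have hshift : ∀ θ, cos θ ^ (m : ℝ) = sin (θ + π / 2) ^ m := fun θ => by
    rw [rpow_natCast, sin_add_pi_div_two]
  simp only [c2, hshift, integral_comp_add_right (fun x => sin x ^ m)]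
  norm_num

lemma integral_sin_pow_zero_pi_div_two (m : ℕ) :
    ∫ φ in (0 : ℝ)..(π / 2), sin φ ^ m = c2 m / 2 := by
  have hint : ∀ a b : ℝ, IntervalIntegrable (fun φ => sin φ ^ m) volume a b := fun a b =>
    (continuous_sin.pow m).intervalIntegrable a b
  have hsplit := integral_add_adjacent_intervals (hint 0 (π / 2)) (hint (π / 2) π)
  have hreflect := integral_comp_sub_left (a := 0) (b := π / 2) (fun x => sin x ^ m) π
  simp only [sin_pi_sub, sub_zero, sub_half] at hreflect
  rw [integral_sin_pow_eq_c2, ← hreflect] at hsplit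
  linarith

lemma integral_sin_pow_mul_le {f : ℝ → ℝ} {B : ℝ}
    (hf : IntervalIntegrable (fun φ => sin φ ^ m * f φ) volume 0 π)
    (hB : ∀ φ ∈ Ioo 0 π, f φ ≤ B) :
    ∫ φ in (0 : ℝ)..π, sin φ ^ m * f φ ≤ c2 m * B :=
  calc ∫ φ in (0 : ℝ)..π, sin φ ^ m * f φ ≤ ∫ φ in (0 : ℝ)..π, sin φ ^ m * B :=
        integral_mono_on_of_le_Ioo pi_pos.le hf
          (((continuous_sin.pow m).mul continuous_const).intervalIntegrable _ _) fun φ hφ =>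
          mul_le_mul_of_nonneg_left (hB φ hφ)
            (pow_nonneg (sin_nonneg_of_nonneg_of_le_pi hφ.1.le hφ.2.le) m)
    _ = c2 m * B := by rw [intervalIntegral.integral_mul_const, integral_sin_pow_eq_c2]

lemma le_integral_sin_pow_mul {f : ℝ → ℝ} {L : ℝ}
    (hf : IntervalIntegrable (fun φ => sin φ ^ m * f φ) volume 0 π)
    (hf₀ : ∀ φ ∈ Ioo 0 π, 0 ≤ f φ) (hL : ∀ φ ∈ Ioc 0 (π / 2), L ≤ f φ) :
    c2 m / 2 * L ≤ ∫ φ in (0 : ℝ)..π, sin φ ^ m * f φ := by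
  have hpi := pi_pos
  have hsin : ∀ φ ∈ Ioo 0 π, 0 ≤ sin φ ^ m := fun φ hφ =>
    pow_nonneg (sin_nonneg_of_nonneg_of_le_pi hφ.1.le hφ.2.le) m
  have hf' : IntervalIntegrable (fun φ => sin φ ^ m * f φ) volume 0 (π / 2) :=
    hf.mono_set (uIcc_subset_uIcc left_mem_uIcc (mem_uIcc_of_le (by linarith) (by linarith)))
  have hnonneg : 0 ≤ᵐ[volume.restrict (Ioc 0 π)] fun φ => sin φ ^ m * f φ := by
    rw [← Measure.restrict_congr_set Ioo_ae_eq_Ioc]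
    exact ae_restrict_of_forall_mem measurableSet_Ioo fun φ hφ =>
      mul_nonneg (hsin φ hφ) (hf₀ φ hφ)
  calc c2 m / 2 * L = ∫ φ in (0 : ℝ)..(π / 2), sin φ ^ m * L := by
        rw [intervalIntegral.integral_mul_const, integral_sin_pow_zero_pi_div_two]
    _ ≤ ∫ φ in (0 : ℝ)..(π / 2), sin φ ^ m * f φ :=
        integral_mono_on_of_le_Ioo (by linarith)
          (((continuous_sin.pow m).mul continuous_const).intervalIntegrable _ _) hf'
          fun φ hφ => mul_le_mul_of_nonneg_left (hL φ ⟨hφ.1, hφ.2.le⟩)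
            (hsin φ ⟨hφ.1, by linarith [hφ.2]⟩)
    _ ≤ ∫ φ in (0 : ℝ)..π, sin φ ^ m * f φ :=
        integral_mono_interval le_rfl (by linarith) (by linarith) hnonneg hf

lemma intervalIntegrable_sin_pow_mul_innerIntegralE {r : ℝ} (hr : 0 ≤ r) (m k : ℕ) :
    IntervalIntegrable (fun φ => sin φ ^ m * innerIntegralE r k φ) volume 0 π := by
  rw [intervalIntegrable_iff_integrableOn_Ioo_of_le pi_pos.le]
  refine IntegrableOn.of_bound measure_Ioo_lt_top
    (((continuous_sin.pow m).continuousOn.mul ((continuousOn_innerIntegralE hr k).mono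
      fun φ hφ => (sin_pos_of_pos_of_lt_pi hφ.1 hφ.2).ne')).aestronglyMeasurable
      measurableSet_Ioo) (1 / (k + 1)) ?_
  filter_upwards [ae_restrict_mem measurableSet_Ioo] with φ hφ
  rw [norm_mul, norm_pow, norm_eq_abs, norm_of_nonneg (innerIntegralE_nonneg hr k hφ.1 hφ.2)]
  exact (mul_le_of_le_one_left (innerIntegralE_nonneg hr k hφ.1 hφ.2)
    (pow_le_one₀ (abs_nonneg _) (abs_sin_le_one φ))).trans (innerIntegralE_le hr k hφ.1 hφ.2)

end OuterIntegral

lemma Econst_add_two (m : ℕ) (r : ℝ) :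
    Econst (m + 2) r =
      ((m : ℝ) + 2) / c2 m *
        ∫ φ in (0 : ℝ)..π, sin φ ^ m * innerIntegralE r (m + 1) φ := by
  simp [Econst, innerIntegralE]

/-- for every `r > 0` the constant `c_r = M(π/4,r)/(2(1+r))` is positive
and `c_r ≤ E(n,r) ≤ 3/2` for all `n ≥ 2`. -/
theorem statement12 (r : ℝ) (hr : 0 < r) :
    0 < Mfun (Real.pi / 4) r / (2 * (1 + r)) ∧
    ∀ n : ℕ, 2 ≤ n →
      Mfun (Real.pi / 4) r / (2 * (1 + r)) ≤ Econst n r ∧ Econst n r ≤ 3 / 2 := by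
  have hpi := pi_pos
  have hM : 0 < Mfun (π / 4) r := Mfun_pos hr.le (by linarith) (by linarith)
  refine ⟨by positivity, fun n hn => ?_⟩
  obtain ⟨m, rfl⟩ := Nat.exists_eq_add_of_le' hn
  have hc := c2_pos (Nat.cast_nonneg (α := ℝ) m)
  have hint := intervalIntegrable_sin_pow_mul_innerIntegralE hr.le m (m + 1)
  rw [Econst_add_two]
  constructor
  · have hlower := le_integral_sin_pow_mul hint
      (fun φ hφ => innerIntegralE_nonneg hr.le _ hφ.1 hφ.2)
      (fun φ hφ => Mfun_div_le_innerIntegralE hr.le _ hφ.1 hφ.2)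
    calc Mfun (π / 4) r / (2 * (1 + r))
        ≤ ((m : ℝ) + 2) * Mfun (π / 4) r / (2 * (m + 2 + r)) := by
          rw [div_le_div_iff₀ (by positivity) (by positivity)]
          nlinarith [mul_nonneg (mul_nonneg hM.le hr.le) (Nat.cast_nonneg (α := ℝ) m)]
      _ = ((m : ℝ) + 2) / c2 m * (c2 m / 2 * (Mfun (π / 4) r / ((m + 1 : ℕ) + 1 + r))) := by
          push_cast
          field_simp
          ring
      _ ≤ _ := by gcongr
  · have hupper := integral_sin_pow_mul_le hint
      (fun φ hφ => innerIntegralE_le hr.le _ hφ.1 hφ.2)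
    calc _ ≤ ((m : ℝ) + 2) / c2 m * (c2 m * (1 / ((m + 1 : ℕ) + 1))) := by gcongr
      _ = 1 := by push_cast; field_simp; ring
      _ ≤ 3 / 2 := by norm_num
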